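/- Let f₀ : [0,1]^d → ℝ be continuous. For any skip-DHN f with first-layer width p₁ and skip connection vector (s_2,…,s_L), sup_{x ∈ [0,1]^d} |f(x) − f₀(x)| ≥ (sup_{x} f₀(x) − inf_{x} f₀(x)) / (2(p₁+1)·∏_{ℓ=2}^L (s_ℓ+1)). -/

import Mathlib

noncomputable def heaviside (t : ℝ) : ℝ := if 0 ≤ t then 1 else 0

/-- Hidden-layer functions of a skip-connections augmented deep Heaviside
network: `f⁽ℓ⁺¹⁾(x) = σ₀(W_ℓ f⁽ℓ⁾(x) + V_ℓ x − b_ℓ)`. -/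
noncomputable def skipDhnHidden (p : ℕ → ℕ)
    (W : ∀ ℓ : ℕ, Matrix (Fin (p (ℓ + 1))) (Fin (p ℓ)) ℝ)
    (V : ∀ ℓ : ℕ, Matrix (Fin (p (ℓ + 1))) (Fin (p 0)) ℝ)
    (b : ∀ ℓ : ℕ, Fin (p (ℓ + 1)) → ℝ) :
    (ℓ : ℕ) → (Fin (p 0) → ℝ) → Fin (p ℓ) → ℝ
  | 0, x => x
  | (ℓ + 1), x => fun j =>
      heaviside ((W ℓ).mulVec (skipDhnHidden p W V b ℓ x) j + (V ℓ).mulVec x j - b ℓ j)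

/-!
Let `xm`, `xM` minimise and maximise `f₀` on the cube and restrict everything to the segment
`t ↦ xm + t • (xM - xm)`. There the pre-activation of a unit of layer `ℓ + 1` is a function of
layer `ℓ` plus a term affine in `t`, nonconstant only for the at most `s_{ℓ+1}` units with a skip
connection (all `p₁` units in the first layer). For a fixed output of layer `ℓ`, increasing `t`
switches each such unit at most once, in a fixed direction, so the output of layer `ℓ + 1` is
determined by that of layer `ℓ` and the number of units switched so far. Hence `f` takes at most
`N = (p₁ + 1) ∏ (s_ℓ + 1)` values on the segment, while by the intermediate value theorem `f₀`
attains there the `N + 1` levels `min f₀ + k (max f₀ - min f₀) / N`: two of them share a value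
of `f`, which is therefore `(max f₀ - min f₀) / (2N)`-far from one of them.
-/

open Set Matrix
open scoped Finset

theorem Function.FactorsThrough.encard_range_le {α β γ : Type*} {h : α → β} {σ : α → γ}
    (hσ : h.FactorsThrough σ) : (range h).encard ≤ (range σ).encard := by
  rcases isEmpty_or_nonempty α with hα | ⟨⟨a⟩⟩
  · simp [range_eq_empty]
  · rw [← hσ.extend_comp fun _ => h a, range_comp]
    exact encard_image_le _ _

theorem Monotone.factorsThrough_card {α ι : Type*} [LinearOrder α] {S : α → Finset ι}
    (hS : Monotone S) : S.FactorsThrough fun t => #(S t) := by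
  intro t t' h
  rcases le_total t t' with ht | ht
  · exact Finset.eq_of_subset_of_card_le (hS ht) h.ge
  · exact (Finset.eq_of_subset_of_card_le (hS ht) h.le).symm

section SwitchedUnits

variable {ι : Type*} [Fintype ι] (D A : ι → ℝ)

/-- The units `j` of the layer `t ↦ (heaviside (D j + A j * t))_j` whose output at `t` differs
from their output as `t → -∞`. -/
noncomputable def switchedUnits (t : ℝ) : Finset ι :=
  {j | 0 < A j ∧ 0 ≤ D j + A j * t ∨ A j < 0 ∧ D j + A j * t < 0}

theorem switchedUnits_mono : Monotone (switchedUnits D A) := by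
  intro t t' htt' j
  simp only [switchedUnits, Finset.mem_filter, Finset.mem_univ, true_and]
  rintro (⟨hA, hj⟩ | ⟨hA, hj⟩)
  · exact Or.inl ⟨hA, by nlinarith⟩
  · exact Or.inr ⟨hA, by nlinarith⟩

theorem card_switchedUnits_le (t : ℝ) : #(switchedUnits D A t) ≤ #{j | A j ≠ 0} := by
  refine Finset.card_le_card fun j => ?_
  simp only [switchedUnits, Finset.mem_filter, Finset.mem_univ, true_and]
  rintro (⟨hA, -⟩ | ⟨hA, -⟩)
  exacts [hA.ne', hA.ne]

theorem heaviside_affine_eq_of_switchedUnits_eq {t t' : ℝ}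
    (h : switchedUnits D A t = switchedUnits D A t') (j : ι) :
    heaviside (D j + A j * t) = heaviside (D j + A j * t') := by
  have hj := congrArg (j ∈ ·) h
  simp only [switchedUnits, Finset.mem_filter, Finset.mem_univ, true_and, eq_iff_iff] at hj
  rcases lt_trichotomy (A j) 0 with hA | hA | hA
  · simp only [hA, hA.not_gt, false_and, true_and, false_or] at hj
    simp only [heaviside, ← not_lt, hj]
  · simp only [hA, zero_mul, add_zero]
  · simp only [hA, hA.not_gt, false_and, true_and, or_false] at hj
    simp only [heaviside, hj]

end SwitchedUnits

theorem encard_range_heaviside_affine_le {α ι : Type*} [Fintype ι] (H : ℝ → α)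
    (F : ι → α → ℝ) (A : ι → ℝ) :
    (range fun t j => heaviside (F j (H t) + A j * t)).encard ≤
      (range H).encard * (#{j | A j ≠ 0} + 1 : ℕ) := by
  set m := #{j | A j ≠ 0}
  let code : ℝ → α × Fin (m + 1) := fun t =>
    (H t, ⟨#(switchedUnits (fun j => F j (H t)) A t),
      Nat.lt_succ_of_le (card_switchedUnits_le _ _ _)⟩)
  have hcode : (fun t j => heaviside (F j (H t) + A j * t)).FactorsThrough code := by
    intro t t' h
    simp only [code, Prod.mk.injEq, Fin.mk.injEq] at h
    obtain ⟨hH, hcard⟩ := h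
    rw [hH] at hcard
    simp only [hH]
    exact funext <| heaviside_affine_eq_of_switchedUnits_eq _ _ <|
      (switchedUnits_mono _ A).factorsThrough_card hcard
  calc _ ≤ (range code).encard := hcode.encard_range_le
    _ ≤ (range H ×ˢ (univ : Set (Fin (m + 1)))).encard :=
        encard_le_encard fun _ ⟨t, ht⟩ => ht ▸ ⟨mem_range_self t, mem_univ _⟩
    _ = (range H).encard * (m + 1 : ℕ) := by simp [encard_prod]

theorem Matrix.mulVec_lineMap {R m n : Type*} [CommRing R] [Fintype n] (M : Matrix m n R)
    (x y : n → R) (t : R) : M *ᵥ AffineMap.lineMap x y t = M *ᵥ x + t • M *ᵥ (y - x) := by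
  rw [AffineMap.lineMap_apply_module', mulVec_add, mulVec_smul, add_comm]

theorem skipDhnHidden_succ_lineMap (p : ℕ → ℕ)
    (W : ∀ ℓ : ℕ, Matrix (Fin (p (ℓ + 1))) (Fin (p ℓ)) ℝ)
    (V : ∀ ℓ : ℕ, Matrix (Fin (p (ℓ + 1))) (Fin (p 0)) ℝ)
    (b : ∀ ℓ : ℕ, Fin (p (ℓ + 1)) → ℝ) (ℓ : ℕ) (x y : Fin (p 0) → ℝ) (t : ℝ) :
    skipDhnHidden p W V b (ℓ + 1) (AffineMap.lineMap x y t) = fun j =>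
      heaviside ((W ℓ *ᵥ skipDhnHidden p W V b ℓ (AffineMap.lineMap x y t)) j
        + ((V ℓ *ᵥ x) j - b ℓ j) + (V ℓ *ᵥ (y - x)) j * t) := by
  funext j
  simp only [skipDhnHidden, mulVec_lineMap, Pi.add_apply, Pi.smul_apply, smul_eq_mul]
  ring_nf

open Classical in
theorem encard_range_skipDhnHidden_lineMap_le (p s : ℕ → ℕ)
    (W : ∀ ℓ : ℕ, Matrix (Fin (p (ℓ + 1))) (Fin (p ℓ)) ℝ)
    (V : ∀ ℓ : ℕ, Matrix (Fin (p (ℓ + 1))) (Fin (p 0)) ℝ)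
    (b : ∀ ℓ : ℕ, Fin (p (ℓ + 1)) → ℝ) (hV0 : V 0 = 0) (x y : Fin (p 0) → ℝ)
    {ℓ : ℕ} (hℓ : 1 ≤ ℓ)
    (hV : ∀ k, 1 ≤ k → k + 1 ≤ ℓ → #{j | V k j ≠ 0} ≤ s (k + 1)) :
    (range fun t : ℝ => skipDhnHidden p W V b ℓ (AffineMap.lineMap x y t)).encard ≤
      ((p 1 + 1) * ∏ k ∈ Finset.Icc 2 ℓ, (s k + 1) : ℕ) := by
  induction ℓ, hℓ using Nat.le_induction with
  | base =>
    have hlayer := encard_range_heaviside_affine_le (fun _ => ())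
      (fun j _ => (W 0 *ᵥ x) j - b 0 j) (fun j => (W 0 *ᵥ (y - x)) j)
    have hA : #{j | (W 0 *ᵥ (y - x)) j ≠ 0} ≤ p 1 :=
      (Finset.card_filter_le _ _).trans_eq (Finset.card_fin _)
    have hfirst : ∀ t, skipDhnHidden p W V b 1 (AffineMap.lineMap x y t) =
        fun j => heaviside ((W 0 *ᵥ x) j - b 0 j + (W 0 *ᵥ (y - x)) j * t) := by
      intro t; funext j
      simp only [skipDhnHidden, hV0, zero_mulVec, mulVec_lineMap,
        Pi.add_apply, Pi.smul_apply, Pi.zero_apply, smul_eq_mul]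
      ring_nf
    simp only [hfirst]
    rw [range_const, encard_singleton, one_mul] at hlayer
    rw [Finset.Icc_eq_empty (by norm_num), Finset.prod_empty, mul_one]
    exact hlayer.trans (by exact_mod_cast Nat.succ_le_succ hA)
  | succ ℓ hℓ ih =>
    have hlayer := encard_range_heaviside_affine_le
      (fun t => skipDhnHidden p W V b ℓ (AffineMap.lineMap x y t))
      (fun j v => (W ℓ *ᵥ v) j + ((V ℓ *ᵥ x) j - b ℓ j)) (fun j => (V ℓ *ᵥ (y - x)) j)
    have hA : #{j | (V ℓ *ᵥ (y - x)) j ≠ 0} ≤ s (ℓ + 1) := by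
      refine (Finset.card_le_card fun j => ?_).trans (hV ℓ hℓ le_rfl)
      simp only [Finset.mem_filter, Finset.mem_univ, true_and]
      exact fun hA hrow => hA (by simp [mulVec, hrow])
    simp only [skipDhnHidden_succ_lineMap]
    calc _ ≤ _ := hlayer
      _ ≤ ((p 1 + 1) * ∏ k ∈ Finset.Icc 2 ℓ, (s k + 1) : ℕ) * (s (ℓ + 1) + 1 : ℕ) := by
          gcongr
          · exact ih fun k hk hkℓ => hV k hk (hkℓ.trans (Nat.le_succ ℓ))
      _ = _ := by
          rw [← Nat.cast_mul, Finset.prod_Icc_succ_top (by omega), mul_assoc]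

theorem heaviside_mem (t : ℝ) : heaviside t ∈ ({0, 1} : Set ℝ) := by
  unfold heaviside; split_ifs <;> simp

theorem finite_range_skipDhnHidden (p : ℕ → ℕ)
    (W : ∀ ℓ : ℕ, Matrix (Fin (p (ℓ + 1))) (Fin (p ℓ)) ℝ)
    (V : ∀ ℓ : ℕ, Matrix (Fin (p (ℓ + 1))) (Fin (p 0)) ℝ)
    (b : ∀ ℓ : ℕ, Fin (p (ℓ + 1)) → ℝ) {ℓ : ℕ} (hℓ : 1 ≤ ℓ) :
    (range (skipDhnHidden p W V b ℓ)).Finite := by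
  obtain ⟨k, rfl⟩ := Nat.exists_eq_add_of_le' hℓ
  refine (Finite.pi' fun _ => toFinite ({0, 1} : Set ℝ)).subset ?_
  rintro _ ⟨x, rfl⟩ j
  exact heaviside_mem _

theorem IsCompact.bddAbove_range_abs_sub {X : Type*} [TopologicalSpace X] {K : Set X}
    (hK : IsCompact K) {f f₀ : X → ℝ} (hf : Bornology.IsBounded (range f))
    (hf₀ : ContinuousOn f₀ K) : BddAbove (range fun x : K => |f x - f₀ x|) := by
  obtain ⟨C, hC⟩ := hf.exists_norm_le
  obtain ⟨C₀, hC₀⟩ := hK.exists_bound_of_continuousOn hf₀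
  refine ⟨C + C₀, ?_⟩
  rintro _ ⟨x, rfl⟩
  exact (abs_sub _ _).trans (add_le_add (hC _ (mem_range_self _)) (hC₀ x x.2))

theorem exists_le_abs_sub_of_encard_range_le {g h : ℝ → ℝ} {a b : ℝ} {N : ℕ}
    (hab : a ≤ b) (hg : ContinuousOn g (Icc a b)) (hh : (range h).encard ≤ N) :
    ∃ t ∈ Icc a b, (g b - g a) / (2 * N) ≤ |h t - g t| := by
  by_contra! hclose
  set ε := (g b - g a) / (2 * N)
  have hε : 0 < ε := (abs_nonneg _).trans_lt (hclose a (left_mem_Icc.2 hab))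
  have hN : (N : ℝ) ≠ 0 := by rintro hN; simp [ε, hN] at hε
  have hlevel : ∀ k : Fin (N + 1), g a + 2 * ε * k ∈ Icc (g a) (g b) := fun k => by
    have hk : (k : ℝ) ≤ N := by exact_mod_cast Nat.lt_succ_iff.1 k.2
    have hgap : 2 * ε * N = g b - g a := by simp only [ε]; field_simp
    constructor <;> nlinarith [k.val.cast_nonneg (α := ℝ)]
  choose t ht hgt using fun k => intermediate_value_Icc hab hg (hlevel k)
  obtain ⟨k, k', hkk', heq⟩ : ∃ k k', k < k' ∧ h (t k) = h (t k') := by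
    by_contra! hinj
    have hinj : Function.Injective (h ∘ t) := fun k k' e => by
      by_contra hne
      rcases lt_or_gt_of_ne hne with hlt | hlt
      exacts [hinj k k' hlt e, hinj k' k hlt e.symm]
    have := (hinj.encard_range.trans (encard_le_encard (range_comp_subset_range t h))).trans hh
    simp only [ENat.card_eq_coe_fintype_card, Fintype.card_fin] at this
    exact absurd this (by exact_mod_cast Nat.not_succ_le_self N)
  have hk := hclose (t k) (ht k)
  have hk' := hclose (t k') (ht k')
  rw [hgt, abs_sub_lt_iff] at hk hk'
  rw [heq] at hk
  have : (k : ℝ) + 1 ≤ k' := by exact_mod_cast hkk'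
  nlinarith

theorem skip_dhn_approximation_lower_bound_general (L : ℕ) (hL : 1 ≤ L)
    (p : ℕ → ℕ) (s : ℕ → ℕ)
    (W : ∀ ℓ : ℕ, Matrix (Fin (p (ℓ + 1))) (Fin (p ℓ)) ℝ)
    (V : ∀ ℓ : ℕ, Matrix (Fin (p (ℓ + 1))) (Fin (p 0)) ℝ)
    (b : ∀ ℓ : ℕ, Fin (p (ℓ + 1)) → ℝ)
    (hV0 : V 0 = 0)
    (hV : ∀ ℓ : ℕ, 1 ≤ ℓ → ℓ + 1 ≤ L →
      (@Finset.filter _ (fun j : Fin (p (ℓ + 1)) => V ℓ j ≠ 0) (fun _ => inferInstance) Finset.univ).card ≤ s (ℓ + 1))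
    (w : Fin (p L) → ℝ) (c : ℝ)
    (f : (Fin (p 0) → ℝ) → ℝ)
    (hf : ∀ x, f x = (∑ j, w j * skipDhnHidden p W V b L x j) - c)
    (f₀ : (Fin (p 0) → ℝ) → ℝ)
    (hcont : ContinuousOn f₀ (Set.Icc (0 : Fin (p 0) → ℝ) 1)) :
    ((⨆ x : Set.Icc (0 : Fin (p 0) → ℝ) 1, f₀ x) -
        ⨅ x : Set.Icc (0 : Fin (p 0) → ℝ) 1, f₀ x) /
      (2 * ((p 1 + 1) * ∏ ℓ ∈ Finset.Icc 2 L, ((s ℓ : ℝ) + 1))) ≤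
      ⨆ x : Set.Icc (0 : Fin (p 0) → ℝ) 1, |f x - f₀ x| := by
  set K := Icc (0 : Fin (p 0) → ℝ) 1
  have hKne : K.Nonempty := nonempty_Icc.2 zero_le_one
  have : Nonempty K := hKne.to_subtype
  obtain ⟨xM, hxM, hmax⟩ := isCompact_Icc.exists_isMaxOn hKne hcont
  obtain ⟨xm, hxm, hmin⟩ := isCompact_Icc.exists_isMinOn hKne hcont
  set γ : ℝ → Fin (p 0) → ℝ := ⇑(AffineMap.lineMap (k := ℝ) xm xM)
  have hγK : MapsTo γ (Icc 0 1) K := (convex_Icc 0 1).mapsTo_lineMap hxm hxM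
  set N := (p 1 + 1) * ∏ ℓ ∈ Finset.Icc 2 L, (s ℓ + 1)
  have hfG : f = (fun v => ∑ j, w j * v j - c) ∘ skipDhnHidden p W V b L := funext hf
  have hrange : (range (f ∘ γ)).encard ≤ N := by
    rw [hfG, Function.comp_assoc, range_comp]
    refine (encard_image_le _ _).trans <|
      encard_range_skipDhnHidden_lineMap_le p s W V b hV0 xm xM hL fun k hk hkL => ?_
    convert hV k hk hkL
  obtain ⟨t, ht, hlow⟩ := exists_le_abs_sub_of_encard_range_le zero_le_one
    (hcont.comp AffineMap.lineMap_continuous.continuousOn hγK) hrange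
  have hbdd : BddAbove (range fun x : K => |f x - f₀ x|) := by
    refine isCompact_Icc.bddAbove_range_abs_sub ?_ hcont
    rw [hfG, range_comp]
    exact ((finite_range_skipDhnHidden p W V b hL).image _).isBounded
  calc _ ≤ (f₀ xM - f₀ xm) / (2 * N) := by
        push_cast [N]
        gcongr
        exacts [ciSup_le fun x => hmax x.2, le_ciInf fun x => hmin x.2]
    _ ≤ |f (γ t) - f₀ (γ t)| := by
        simpa only [Function.comp_apply, AffineMap.lineMap_apply_one, AffineMap.lineMap_apply_zero]
          using hlow
    _ ≤ ⨆ x : K, |f x - f₀ x| := le_ciSup hbdd ⟨γ t, hγK ht⟩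

/-- Lower bound for approximation of a continuous function by a skip-DHN:
the sup-norm error is at least `(sup f₀ − inf f₀)/(2(p₁+1)∏_{ℓ=2}^L (s_ℓ+1))`. -/
theorem skip_dhn_approximation_lower_bound (L : ℕ) (hL : 1 ≤ L)
    (p : ℕ → ℕ) (hd : 1 ≤ p 0) (s : ℕ → ℕ)
    (W : ∀ ℓ : ℕ, Matrix (Fin (p (ℓ + 1))) (Fin (p ℓ)) ℝ)
    (V : ∀ ℓ : ℕ, Matrix (Fin (p (ℓ + 1))) (Fin (p 0)) ℝ)
    (b : ∀ ℓ : ℕ, Fin (p (ℓ + 1)) → ℝ)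
    (hV0 : V 0 = 0)
    (hV : ∀ ℓ : ℕ, 1 ≤ ℓ → ℓ + 1 ≤ L →
      (@Finset.filter _ (fun j : Fin (p (ℓ + 1)) => V ℓ j ≠ 0) (fun _ => inferInstance) Finset.univ).card ≤ s (ℓ + 1))
    (w : Fin (p L) → ℝ) (c : ℝ)
    (f : (Fin (p 0) → ℝ) → ℝ)
    (hf : ∀ x, f x = (∑ j, w j * skipDhnHidden p W V b L x j) - c)
    (f₀ : (Fin (p 0) → ℝ) → ℝ)
    (hcont : ContinuousOn f₀ (Set.Icc (0 : Fin (p 0) → ℝ) 1)) :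
    ((⨆ x : Set.Icc (0 : Fin (p 0) → ℝ) 1, f₀ x) -
        ⨅ x : Set.Icc (0 : Fin (p 0) → ℝ) 1, f₀ x) /
      (2 * ((p 1 + 1) * ∏ ℓ ∈ Finset.Icc 2 L, ((s ℓ : ℝ) + 1))) ≤
      ⨆ x : Set.Icc (0 : Fin (p 0) → ℝ) 1, |f x - f₀ x| :=
  skip_dhn_approximation_lower_bound_general L hL p s W V b hV0 hV w c f hf f₀ hcont
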